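/- Let m := ∑_{i,j} A i j be the number of edges of the graph. Then the global K-connectivity satisfies cG 1 = (m : ℝ≥0∞) / (n(n−1) : ℝ≥0∞), and it is nondecreasing in K: cG 1 ≤ cG 2 ≤ ⋯ ≤ cG (n−1). -/
import Mathlib


open scoped ENNReal

open scoped Classical in
/-- The `K`-path length matrix entry `ℓK i j`. -/
noncomputable def ellK (n : ℕ) (A : Matrix (Fin n) (Fin n) ℕ) (K : ℕ) (i j : Fin n) : ℕ∞ :=
  if i = j then 0
  else sInf ((fun k : ℕ => (k : ℕ∞)) '' {k : ℕ | 1 ≤ k ∧ k ≤ K ∧ (A ^ k) i j ≠ 0})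

open scoped Classical in
/-- The `K`-path counter matrix entry `cK i j`. -/
noncomputable def cKmat (n : ℕ) (A : Matrix (Fin n) (Fin n) ℕ) (K : ℕ) (i j : Fin n) : ℕ :=
  if i = j then 1
  else if ∃ k : ℕ, 1 ≤ k ∧ k ≤ K ∧ (A ^ k) i j ≠ 0 then
    (A ^ sInf {k : ℕ | 1 ≤ k ∧ k ≤ K ∧ (A ^ k) i j ≠ 0}) i j
  else 0

/-- The out-degree of node `i`. -/
def degout (n : ℕ) (A : Matrix (Fin n) (Fin n) ℕ) (i : Fin n) : ℕ :=
  ∑ k : Fin n, A i k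

/-- The in-degree of node `i`. -/
def degin (n : ℕ) (A : Matrix (Fin n) (Fin n) ℕ) (i : Fin n) : ℕ :=
  ∑ k : Fin n, A k i

/-- The connectivity `K_out`-centrality of node `i`. -/
noncomputable def hatHout (n : ℕ) (A : Matrix (Fin n) (Fin n) ℕ) (K : ℕ) (i : Fin n) : ℝ≥0∞ :=
  ∑ j ∈ Finset.univ.erase i, (cKmat n A K i j : ℝ≥0∞) / (ellK n A K i j : ℝ≥0∞)

/-- The connectivity `K_in`-centrality of node `i`. -/
noncomputable def hatHin (n : ℕ) (A : Matrix (Fin n) (Fin n) ℕ) (K : ℕ) (i : Fin n) : ℝ≥0∞ :=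
  ∑ j ∈ Finset.univ.erase i, (cKmat n A K j i : ℝ≥0∞) / (ellK n A K j i : ℝ≥0∞)

/-- The global `K`-connectivity `cG K`. -/
noncomputable def globalConn (n : ℕ) (A : Matrix (Fin n) (Fin n) ℕ) (K : ℕ) : ℝ≥0∞ :=
  ((n : ℝ≥0∞) * ((n : ℝ≥0∞) - 1))⁻¹ *
    ∑ i : Fin n, ∑ j ∈ Finset.univ.erase i, (cKmat n A K i j : ℝ≥0∞) / (ellK n A K i j : ℝ≥0∞)


open scoped Classical in
lemma sInf_image_natCast (S : Set ℕ) (hS : S.Nonempty) :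
    sInf ((fun k : ℕ => (k : ℕ∞)) '' S) = ((sInf S : ℕ) : ℕ∞) := by
  apply le_antisymm
  · exact sInf_le (Set.mem_image_of_mem _ (Nat.sInf_mem hS))
  · apply le_sInf
    rintro x ⟨k, hk, rfl⟩
    simpa using (Nat.cast_le (α := ℕ∞)).2 (Nat.sInf_le hk)

lemma sInf_set_eq (n K K' : ℕ) (A : Matrix (Fin n) (Fin n) ℕ) (i j : Fin n)
    (hKK' : K ≤ K') (h : ∃ k, 1 ≤ k ∧ k ≤ K ∧ (A ^ k) i j ≠ 0) :
    sInf {k : ℕ | 1 ≤ k ∧ k ≤ K' ∧ (A ^ k) i j ≠ 0}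
      = sInf {k : ℕ | 1 ≤ k ∧ k ≤ K ∧ (A ^ k) i j ≠ 0} := by
  set S := {k : ℕ | 1 ≤ k ∧ k ≤ K ∧ (A ^ k) i j ≠ 0} with hSdef
  set S' := {k : ℕ | 1 ≤ k ∧ k ≤ K' ∧ (A ^ k) i j ≠ 0} with hS'def
  have hsub : S ⊆ S' := fun k hk => ⟨hk.1, hk.2.1.trans hKK', hk.2.2⟩
  have hmem : sInf S ∈ S := Nat.sInf_mem h
  apply le_antisymm
  · exact Nat.sInf_le (hsub hmem)
  · have hmem' : sInf S' ∈ S' := Nat.sInf_mem ⟨_, hsub hmem⟩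
    have hle : sInf S' ≤ sInf S := Nat.sInf_le (hsub hmem)
    exact Nat.sInf_le ⟨hmem'.1, hle.trans hmem.2.1, hmem'.2.2⟩

/-- with `m` the number of edges, `cG 1 = m / (n(n−1))`, and the global
`K`-connectivity is nondecreasing in `K`. -/
theorem globalConn_one_and_monotone (n : ℕ) (hn : 2 ≤ n)
    (A : Matrix (Fin n) (Fin n) ℕ)
    (hA : ∀ i j, A i j = 0 ∨ A i j = 1) (hdiag : ∀ i, A i i = 0) :
    globalConn n A 1 =
      ((∑ i : Fin n, ∑ j : Fin n, A i j : ℕ) : ℝ≥0∞) /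
        ((n : ℝ≥0∞) * ((n : ℝ≥0∞) - 1)) ∧
    (∀ K K' : ℕ, 1 ≤ K → K ≤ K' → K' ≤ n - 1 →
      globalConn n A K ≤ globalConn n A K') := by
  constructor
  · -- K = 1 case
    unfold globalConn
    rw [ENNReal.div_eq_inv_mul]
    congr 1
    have hterm : ∀ i j : Fin n, j ≠ i →
        (cKmat n A 1 i j : ℝ≥0∞) / (ellK n A 1 i j : ℝ≥0∞) = (A i j : ℝ≥0∞) := by
      intro i j hji
      have hij : i ≠ j := hji.symm
      by_cases hAij : A i j = 0
      · have hc : cKmat n A 1 i j = 0 := by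
          unfold cKmat
          rw [if_neg hij, if_neg]
          rintro ⟨k, hk1, hkK, hk⟩
          interval_cases k
          simp [pow_one, hAij] at hk
        rw [hc, hAij]
        simp
      · have hex : ∃ k : ℕ, 1 ≤ k ∧ k ≤ 1 ∧ (A ^ k) i j ≠ 0 :=
          ⟨1, le_refl 1, le_refl 1, by simpa [pow_one] using hAij⟩
        have hSeq : {k : ℕ | 1 ≤ k ∧ k ≤ 1 ∧ (A ^ k) i j ≠ 0} = {1} := by
          ext k
          simp only [Set.mem_setOf_eq, Set.mem_singleton_iff]
          constructor
          · rintro ⟨h1, h2, _⟩; omega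
          · rintro rfl; exact ⟨le_refl 1, le_refl 1, by simpa [pow_one] using hAij⟩
        have hsInf : sInf {k : ℕ | 1 ≤ k ∧ k ≤ 1 ∧ (A ^ k) i j ≠ 0} = 1 := by
          rw [hSeq]; simp
        have hc : cKmat n A 1 i j = A i j := by
          unfold cKmat
          rw [if_neg hij, if_pos hex, hsInf, pow_one]
        have hl : ellK n A 1 i j = 1 := by
          unfold ellK
          rw [if_neg hij, sInf_image_natCast {k : ℕ | 1 ≤ k ∧ k ≤ 1 ∧ (A ^ k) i j ≠ 0} hex, hsInf]
          rfl
        rw [hc, hl]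
        simp
    calc ∑ i : Fin n, ∑ j ∈ Finset.univ.erase i,
          (cKmat n A 1 i j : ℝ≥0∞) / (ellK n A 1 i j : ℝ≥0∞)
        = ∑ i : Fin n, ∑ j ∈ Finset.univ.erase i, (A i j : ℝ≥0∞) := by
          refine Finset.sum_congr rfl fun i _ => Finset.sum_congr rfl fun j hj => ?_
          exact hterm i j (Finset.ne_of_mem_erase hj)
      _ = ∑ i : Fin n, ∑ j : Fin n, (A i j : ℝ≥0∞) := by
          refine Finset.sum_congr rfl fun i _ => ?_
          exact Finset.sum_erase _ (by simp [hdiag i])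
      _ = ((∑ i : Fin n, ∑ j : Fin n, A i j : ℕ) : ℝ≥0∞) := by
          push_cast; rfl
  · -- monotonicity
    intro K K' hK1 hKK' _
    unfold globalConn
    refine mul_le_mul_right ?_ _
    refine Finset.sum_le_sum fun i _ => Finset.sum_le_sum fun j hj => ?_
    have hij : i ≠ j := (Finset.ne_of_mem_erase hj).symm
    by_cases hex : ∃ k : ℕ, 1 ≤ k ∧ k ≤ K ∧ (A ^ k) i j ≠ 0
    · have hex' : ∃ k : ℕ, 1 ≤ k ∧ k ≤ K' ∧ (A ^ k) i j ≠ 0 := by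
        obtain ⟨k, h1, h2, h3⟩ := hex
        exact ⟨k, h1, h2.trans hKK', h3⟩
      have hInf := sInf_set_eq n K K' A i j hKK' hex
      have hc : cKmat n A K' i j = cKmat n A K i j := by
        unfold cKmat
        rw [if_neg hij, if_neg hij, if_pos hex', if_pos hex, hInf]
      have hl : ellK n A K' i j = ellK n A K i j := by
        unfold ellK
        rw [if_neg hij, if_neg hij,
          sInf_image_natCast {k : ℕ | 1 ≤ k ∧ k ≤ K ∧ (A ^ k) i j ≠ 0} hex,
          sInf_image_natCast {k : ℕ | 1 ≤ k ∧ k ≤ K' ∧ (A ^ k) i j ≠ 0} hex', hInf]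
      rw [hc, hl]
    · have hc : cKmat n A K i j = 0 := by
        unfold cKmat
        rw [if_neg hij, if_neg hex]
      rw [hc]
      simp
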